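/- arXiv:2509.18991 — 2 statements merged into one kernel-verified Lean document; each statement's English description precedes it below -/
import Mathlib

section
/- Let κ be an uncountable strong limit cardinal of countable cofinality. Then the generalized Baire space κ^ω is homeomorphic to P(κ), the power set of (the order type of) κ endowed with the topology whose basic open sets are N_{η,a} = {b ⊆ κ : b ∩ [0,η) = a} for η < κ and a ⊆ [0,η). (The homeomorphism between (ℵ_ω)^ω and P(ℵ_ω) used in the proof of Proposition 3.4(3); cf. Example 2.1(4).) -/
noncomputable section
open Cardinal Set

/-- The ordinal below `o` corresponding to an element of the order type `o.ToType`. -/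
def ordinalOf {o : Ordinal} (x : o.ToType) : Ordinal :=
  ((Ordinal.ToType.mk (o := o)).symm x : Set.Iio o).1

/-- Each ordinal's order type carries the discrete topology; the generalized Baire
space `κ^ω = ℕ → κ.ord.ToType` then carries the product topology. -/
instance (o : Ordinal) : TopologicalSpace o.ToType := ⊥

/-- A subset of the generalized Baire space `κ^ω` is `κ`-perfect if it is nonempty,
closed, and every open neighborhood of each of its points meets it in a set of
cardinality at least `κ`. -/
def IsKappaPerfect (κ : Cardinal) (P : Set (ℕ → κ.ord.ToType)) : Prop :=
  P.Nonempty ∧ IsClosed P ∧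
    ∀ x ∈ P, ∀ U : Set (ℕ → κ.ord.ToType), IsOpen U → x ∈ U → κ ≤ #(P ∩ U : Set _)

/-- A set `A ⊆ κ^ω` has the `κ`-perfect set property if either `|A| ≤ κ` or `A`
contains a `κ`-perfect subset. -/
def HasKappaPSP (κ : Cardinal) (A : Set (ℕ → κ.ord.ToType)) : Prop :=
  #A ≤ κ ∨ ∃ P ⊆ A, IsKappaPerfect κ P

/-- The topology on the power set of (the order type of) κ whose basic open sets are
N_{η,a} = {b : b ∩ [0,η) = a} for η < κ and a ⊆ [0,η). -/
def powTop (κ : Cardinal) : TopologicalSpace (Set κ.ord.ToType) :=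
  TopologicalSpace.generateFrom
    {U | ∃ (η : κ.ord.ToType) (a : Set κ.ord.ToType), a ⊆ Set.Iio η ∧
      U = {b | b ∩ Set.Iio η = a}}

open Topology

instance (o : Ordinal) : DiscreteTopology o.ToType := ⟨rfl⟩

/-! ### Generic helpers -/

universe u v

/-- Type synonym equipped with the discrete topology. -/
def MyDisc (X : Type u) : Type u := X

instance (X : Type u) : TopologicalSpace (MyDisc X) := ⊥
instance (X : Type u) : DiscreteTopology (MyDisc X) := ⟨rfl⟩

/-- Any equiv between discrete spaces is a homeomorphism. -/
def discHomeo {X Y : Type*} [TopologicalSpace X] [TopologicalSpace Y]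
    [DiscreteTopology X] [DiscreteTopology Y] (e : X ≃ Y) : X ≃ₜ Y :=
  ⟨e, continuous_of_discreteTopology, continuous_of_discreteTopology⟩

/-- A product of binary products is the binary product of the products. -/
def piProdHomeo {ι : Type*} {A B : ι → Type*} [∀ i, TopologicalSpace (A i)]
    [∀ i, TopologicalSpace (B i)] : (∀ i, A i × B i) ≃ₜ (∀ i, A i) × (∀ i, B i) where
  toFun f := (fun i => (f i).1, fun i => (f i).2)
  invFun g := fun i => (g.1 i, g.2 i)
  left_inv f := rfl
  right_inv g := rfl
  continuous_toFun := Continuous.prodMk (continuous_pi fun i => (continuous_apply i).fst)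
    (continuous_pi fun i => (continuous_apply i).snd)
  continuous_invFun := continuous_pi fun i =>
    ((continuous_apply i).comp continuous_fst).prodMk ((continuous_apply i).comp continuous_snd)

/-- Componentwise homeomorphisms give a homeomorphism of sigma types. -/
def sigmaCongrRightHomeo {ι : Type*} {A B : ι → Type*} [∀ i, TopologicalSpace (A i)]
    [∀ i, TopologicalSpace (B i)] (F : ∀ i, A i ≃ₜ B i) : (Σ i, A i) ≃ₜ Σ i, B i where
  toEquiv := Equiv.sigmaCongrRight fun i => (F i).toEquiv
  continuous_toFun := continuous_sigma fun i => continuous_sigmaMk.comp (F i).continuous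
  continuous_invFun := continuous_sigma fun i => continuous_sigmaMk.comp (F i).symm.continuous

/-- Currying for products indexed by a binary product where factors depend only on the
second coordinate. -/
def curryHomeo {α β : Type*} {G : β → Type*} [∀ b, TopologicalSpace (G b)] :
    (∀ q : α × β, G q.2) ≃ₜ (α → ∀ b, G b) where
  toFun f a b := f (a, b)
  invFun g q := g q.1 q.2
  left_inv f := rfl
  right_inv g := rfl
  continuous_toFun := continuous_pi fun a => continuous_pi fun b => continuous_apply (a, b)
  continuous_invFun := continuous_pi fun q => (continuous_apply q.2).comp (continuous_apply q.1)

/-- Absorbing a factor into one coordinate of a product. -/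
def absorbHomeo {ι : Type*} [DecidableEq ι] {G : ι → Type*} [∀ i, TopologicalSpace (G i)]
    {A : Type*} [TopologicalSpace A] (i0 : ι) (e : (A × G i0) ≃ₜ G i0) :
    (A × ∀ i, G i) ≃ₜ ∀ i, G i :=
  ((Homeomorph.refl A).prodCongr (Homeomorph.piSplitAt i0 G)).trans <|
    ((Homeomorph.prodAssoc _ _ _).symm).trans <|
      (e.prodCongr (Homeomorph.refl _)).trans (Homeomorph.piSplitAt i0 G).symm

/-- A countable sigma of copies of a space is the product with `ℕ`. -/
def sigmaNatHomeo (Z : Type*) [TopologicalSpace Z] : (Σ _ : ℕ, Z) ≃ₜ ℕ × Z :=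
  (sigmaCongrRightHomeo fun _ => (Homeomorph.punitProd Z).symm).trans <|
    (Homeomorph.sigmaProdDistrib).symm.trans <|
      (discHomeo (Equiv.sigmaPUnit ℕ : (Σ _ : ℕ, PUnit.{1}) ≃ ℕ)).prodCongr (Homeomorph.refl Z)

/-- The pairing bijection `ℕ × ℕ ≃ ℕ` preserving the first component of `unpair`. -/
def pairShuffle : ℕ × ℕ ≃ ℕ where
  toFun q := Nat.pair (Nat.unpair q.2).1 (Nat.pair q.1 (Nat.unpair q.2).2)
  invFun m := ((Nat.unpair (Nat.unpair m).2).1,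
    Nat.pair (Nat.unpair m).1 ((Nat.unpair (Nat.unpair m).2).2))
  left_inv q := by simp
  right_inv m := by simp

lemma pairShuffle_fst (q : ℕ × ℕ) :
    (Nat.unpair (pairShuffle q)).1 = (Nat.unpair q.2).1 := by
  simp [pairShuffle]

theorem test : True := trivial

/-! ### The main construction context -/

/-- Context: an uncountable strong limit cardinal `κ` of countable cofinality together
with a cofinal sequence of infinite cardinals below it. -/
structure Ctx : Type (u + 1) where
  κ : Cardinal.{u}
  l : ℕ → Cardinal.{u}
  hk : ℵ₀ < κ
  hsl : ∀ c < κ, 2 ^ c < κ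
  hinf : ∀ j, ℵ₀ ≤ l j
  hlt : ∀ j, l j < κ
  hcof : ∀ c < κ, ∃ j, c < l j

namespace Ctx

variable (C : Ctx.{u})

/-- The underlying order type of `κ`. -/
abbrev K : Type u := C.κ.ord.ToType

lemma aleph0_le_kappa : ℵ₀ ≤ C.κ := C.hk.le

/-- The sizes of the successive blocks: each value of `l` occurs infinitely often. -/
def s (n : ℕ) : Cardinal.{u} := C.l (Nat.unpair n).1

lemma s_pair (j m : ℕ) : C.s (Nat.pair j m) = C.l j := by simp [s]

lemma aleph0_le_s (n : ℕ) : ℵ₀ ≤ C.s n := C.hinf _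

lemma s_lt (n : ℕ) : C.s n < C.κ := C.hlt _

/-- The sequence of block boundaries (as ordinals). -/
def o (n : ℕ) : Ordinal.{u} := Nat.rec 0 (fun m acc => acc + (C.s m).ord) n

lemma o_zero : C.o 0 = 0 := rfl

lemma o_succ (n : ℕ) : C.o (n + 1) = C.o n + (C.s n).ord := rfl

lemma o_lt_ord (n : ℕ) : C.o n < C.κ.ord := by
  rw [Cardinal.lt_ord]
  induction n with
  | zero =>
      have : (0 : Cardinal) < C.κ := aleph0_pos.trans C.hk
      simpa [o_zero] using this
  | succ n ih =>
      rw [o_succ, Ordinal.card_add, Cardinal.card_ord]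
      exact Cardinal.add_lt_of_lt C.aleph0_le_kappa ih (C.s_lt n)

lemma o_lt_succ (n : ℕ) : C.o n < C.o (n + 1) := by
  have h : (0 : Ordinal) < (C.s n).ord := by
    rw [Cardinal.lt_ord]
    simpa using aleph0_pos.trans_le (C.aleph0_le_s n)
  calc C.o n = C.o n + 0 := (add_zero _).symm
    _ < C.o n + (C.s n).ord := add_lt_add_right h _
    _ = C.o (n + 1) := (C.o_succ n).symm

lemma o_mono : StrictMono C.o := strictMono_nat_of_lt_succ C.o_lt_succ

lemma o_cofinal {β : Ordinal.{u}} (hβ : β < C.κ.ord) : ∃ n, β < C.o n := by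
  have hc : β.card < C.κ := (Cardinal.lt_ord).1 hβ
  obtain ⟨j, hj⟩ := C.hcof _ hc
  refine ⟨Nat.pair j 0 + 1, ?_⟩
  have h1 : β < (C.l j).ord := Cardinal.lt_ord.2 hj
  have h2 : (C.l j).ord ≤ C.o (Nat.pair j 0 + 1) := by
    rw [o_succ, C.s_pair]
    exact le_add_self
  exact h1.trans_le h2

/-! ### ordinalOf basics -/

lemma ordinalOf_lt_ord {o : Ordinal.{u}} (x : o.ToType) : ordinalOf x < o :=
  ((Ordinal.ToType.mk (o := o)).symm x).2

lemma ordinalOf_lt_iff {o : Ordinal.{u}} {x y : o.ToType} :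
    x < y ↔ ordinalOf x < ordinalOf y := by
  simp only [ordinalOf, Subtype.coe_lt_coe]
  exact (Ordinal.ToType.mk (o := o)).symm.lt_iff_lt.symm

lemma ordinalOf_enum {o : Ordinal.{u}} (β : Ordinal.{u}) (h : β < o) :
    ordinalOf ((Ordinal.ToType.mk (o := o)) ⟨β, h⟩) = β := by
  simp [ordinalOf]

lemma enum_ordinalOf {o : Ordinal.{u}} (x : o.ToType) :
    (Ordinal.ToType.mk (o := o)) ⟨ordinalOf x, ordinalOf_lt_ord x⟩ = x := by
  have h : (⟨ordinalOf x, ordinalOf_lt_ord x⟩ : Set.Iio o) = (Ordinal.ToType.mk (o := o)).symm x :=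
    Subtype.ext rfl
  rw [h, OrderIso.apply_symm_apply]

lemma ordinalOf_injective {o : Ordinal.{u}} : Function.Injective (@ordinalOf o) := by
  intro x y h
  have := congrArg (fun β => β) h
  rw [← enum_ordinalOf x, ← enum_ordinalOf y]
  exact congrArg _ (Subtype.ext h)

/-- The block boundaries as elements of `K`. -/
def eta (n : ℕ) : C.K := (Ordinal.ToType.mk (o := C.κ.ord)) ⟨C.o n, C.o_lt_ord n⟩

lemma ordinalOf_eta (n : ℕ) : ordinalOf (C.eta n) = C.o n := ordinalOf_enum _ _

lemma lt_eta_iff {x : C.K} {n : ℕ} : x < C.eta n ↔ ordinalOf x < C.o n := by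
  rw [ordinalOf_lt_iff, C.ordinalOf_eta]

lemma Iio_eta (n : ℕ) : Set.Iio (C.eta n) = {x : C.K | ordinalOf x < C.o n} := by
  ext x; exact C.lt_eta_iff

/-- The `n`-th block. -/
def I (n : ℕ) : Set C.K := {x | C.o n ≤ ordinalOf x ∧ ordinalOf x < C.o (n + 1)}

lemma I_disjoint {x : C.K} {m n : ℕ} (hm : x ∈ C.I m) (hn : x ∈ C.I n) : m = n := by
  rcases lt_trichotomy m n with h | h | h
  · exact absurd (hm.2.trans_le ((C.o_mono.monotone (Nat.succ_le_of_lt h)).trans hn.1))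
      (lt_irrefl _)
  · exact h
  · exact absurd (hn.2.trans_le ((C.o_mono.monotone (Nat.succ_le_of_lt h)).trans hm.1))
      (lt_irrefl _)

lemma exists_mem_I (x : C.K) : ∃ n, x ∈ C.I n := by
  obtain ⟨m, hm⟩ := C.o_cofinal (ordinalOf_lt_ord x)
  have hex : ∃ k, ordinalOf x < C.o (k + 1) :=
    ⟨m, hm.trans_le (C.o_mono.monotone (Nat.le_succ m))⟩
  refine ⟨Nat.find hex, ?_, Nat.find_spec hex⟩
  rcases Nat.eq_zero_or_pos (Nat.find hex) with h0 | h0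
  · rw [h0, o_zero]; exact zero_le
  · obtain ⟨k, hk⟩ := Nat.exists_eq_succ_of_ne_zero h0.ne'
    rw [hk]
    exact not_lt.1 (Nat.find_min hex (by omega))

lemma I_covers : ⋃ n, C.I n = Set.univ :=
  eq_univ_of_forall fun x => mem_iUnion.2 (C.exists_mem_I x)

lemma enum_val_congr {o : Ordinal.{u}} {β γ : Ordinal.{u}} (h : β = γ) (hβ : β < o) (hγ : γ < o) :
    (Ordinal.ToType.mk (o := o)) ⟨β, hβ⟩ = (Ordinal.ToType.mk (o := o)) ⟨γ, hγ⟩ := by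
  subst h; rfl

/-! ### Cardinalities -/

/-- The `n`-th block has order type `(C.s n).ord`. -/
def intervalEquiv (n : ℕ) : C.I n ≃ (C.s n).ord.ToType where
  toFun x := (Ordinal.ToType.mk (o := (C.s n).ord))
    ⟨ordinalOf (x : C.K) - C.o n, by
      simp only [Set.mem_Iio]
      rw [Ordinal.sub_lt_of_le x.2.1, ← C.o_succ n]
      exact x.2.2⟩
  invFun t := ⟨(Ordinal.ToType.mk (o := C.κ.ord))
      ⟨C.o n + ordinalOf t, by
        have h1 : C.o n + ordinalOf t < C.o (n + 1) := by
          rw [C.o_succ n]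
          exact add_lt_add_right (ordinalOf_lt_ord t) _
        exact h1.trans (C.o_lt_ord (n + 1))⟩, by
    constructor
    · rw [ordinalOf_enum]; exact le_self_add
    · rw [ordinalOf_enum, C.o_succ n]
      exact add_lt_add_right (ordinalOf_lt_ord t) _⟩
  left_inv x := by
    apply Subtype.ext
    dsimp only
    refine (enum_val_congr ?_ _ _).trans (enum_ordinalOf (x : C.K))
    exact (congrArg (C.o n + ·) (ordinalOf_enum _ _)).trans (Ordinal.add_sub_cancel_of_le x.2.1)
  right_inv t := by
    dsimp only
    refine (enum_val_congr ?_ _ _).trans (enum_ordinalOf t)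
    rw [ordinalOf_enum, Ordinal.add_sub_cancel]

lemma mk_I (n : ℕ) : #(C.I n) = C.s n := by
  rw [Cardinal.mk_congr (C.intervalEquiv n), Cardinal.mk_toType, Cardinal.card_ord]

lemma mk_K : #C.K = C.κ := by
  rw [Cardinal.mk_toType, Cardinal.card_ord]

/-- The discrete factor spaces: powersets of the blocks. -/
def D (n : ℕ) : Type u := MyDisc (Set (C.I n))

instance (n : ℕ) : TopologicalSpace (C.D n) := inferInstanceAs (TopologicalSpace (MyDisc _))
instance (n : ℕ) : DiscreteTopology (C.D n) := inferInstanceAs (DiscreteTopology (MyDisc _))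

lemma mk_D (n : ℕ) : #(C.D n) = 2 ^ C.s n := by
  rw [show #(C.D n) = #(Set (C.I n)) from rfl, Cardinal.mk_set, C.mk_I n]

lemma aleph0_le_D (n : ℕ) : ℵ₀ ≤ #(C.D n) := by
  rw [C.mk_D n]
  exact (C.aleph0_le_s n).trans (Cardinal.cantor (C.s n)).le

lemma D_lt (n : ℕ) : #(C.D n) < C.κ := by
  rw [C.mk_D n]; exact C.hsl _ (C.s_lt n)

lemma D_le (n : ℕ) : #(C.D n) ≤ C.κ := (C.D_lt n).le

/-- The product space `Z = ∏ n, D n`. -/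
def Z : Type u := ∀ n, C.D n

instance : TopologicalSpace C.Z := inferInstanceAs (TopologicalSpace (∀ n, C.D n))

/-! ### Set-theoretic equivalences -/

/-- Blocks with equal size parameters have equivalent powersets. -/
def eDD (a b : ℕ) (h : C.s a = C.s b) : C.D a ≃ C.D b :=
  Classical.choice (Cardinal.eq.1 (by rw [C.mk_D, C.mk_D, h]))

/-- Each discrete factor absorbs itself. -/
def eDabsorb (n : ℕ) : (C.D n × C.D n) ≃ C.D n :=
  Classical.choice (Cardinal.eq.1 (by
    simp only [Cardinal.mk_prod, Cardinal.lift_id, Cardinal.lift_uzero]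
    exact Cardinal.mul_eq_self (C.aleph0_le_D n)))

/-- Each discrete factor absorbs `ℕ`. -/
def eNatD0 : (ℕ × C.D 0) ≃ C.D 0 :=
  Classical.choice (Cardinal.eq.1 (by
    simp only [Cardinal.mk_prod, Cardinal.mk_denumerable, Cardinal.lift_aleph0,
      Cardinal.lift_id, Cardinal.lift_uzero]
    rw [Cardinal.mul_eq_max le_rfl (C.aleph0_le_D 0)]
    exact max_eq_right (C.aleph0_le_D 0)))

lemma sum_D_eq : (Cardinal.sum fun j : ℕ => #(C.D (Nat.pair j 0))) = C.κ := by
  apply le_antisymm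
  · refine le_trans (Cardinal.sum_le_sum _ (fun _ => C.κ) fun j => C.D_le _) ?_
    rw [Cardinal.sum_const, Cardinal.mk_denumerable, Cardinal.lift_aleph0, Cardinal.lift_uzero]
    rw [Cardinal.mul_eq_max le_rfl C.aleph0_le_kappa]
    exact max_le C.aleph0_le_kappa le_rfl
  · by_contra h
    push_neg at h
    obtain ⟨j, hj⟩ := C.hcof _ h
    have h1 : C.l j ≤ #(C.D (Nat.pair j 0)) := by
      rw [C.mk_D, C.s_pair]
      exact (Cardinal.cantor _).le
    exact absurd (h1.trans (Cardinal.le_sum _ j)) (not_le.2 hj)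

/-- `K` splits as a countable union of blocks of sizes `2 ^ l j`. -/
def eK : C.K ≃ Σ j : ℕ, C.D (Nat.pair j 0) :=
  Classical.choice (Cardinal.eq.1 (by rw [C.mk_K, Cardinal.mk_sigma, C.sum_D_eq]))

/-- `K` absorbs each discrete factor. -/
def eKD (n : ℕ) : C.K ≃ (C.D n × C.K) :=
  Classical.choice (Cardinal.eq.1 (by
    simp only [Cardinal.mk_prod, Cardinal.lift_id, C.mk_K]
    rw [Cardinal.mul_eq_max (C.aleph0_le_D n) C.aleph0_le_kappa]
    exact (max_eq_right (C.D_le n)).symm))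

/-! ### The homeomorphism between the Baire space and the product of powersets -/

/-- `Z` absorbs each of its factors. -/
def hDZ (m : ℕ) : (C.D m × ∀ n, C.D n) ≃ₜ ∀ n, C.D n :=
  absorbHomeo m (discHomeo (C.eDabsorb m))

/-- `Z` absorbs the discrete space `K` (Lemma C). -/
def hKZ : (C.K × ∀ n, C.D n) ≃ₜ ∀ n, C.D n :=
  ((discHomeo C.eK).prodCongr (Homeomorph.refl _)).trans <|
    (Homeomorph.sigmaProdDistrib).trans <|
      (sigmaCongrRightHomeo fun j => C.hDZ (Nat.pair j 0)).trans <|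
        (sigmaNatHomeo _).trans (absorbHomeo 0 (discHomeo C.eNatD0))

/-- `Z` is homeomorphic to `Z^ω`. -/
def hZomega : (∀ n, C.D n) ≃ₜ (ℕ → ∀ n, C.D n) :=
  (Homeomorph.piCongr pairShuffle
    (fun q => discHomeo (C.eDD q.2 (pairShuffle q) (by simp [s, pairShuffle_fst])))).symm.trans
      curryHomeo

/-- `W ≅ Z × W`. -/
def hWZ : (ℕ → C.K) ≃ₜ ((∀ n, C.D n) × (ℕ → C.K)) :=
  (Homeomorph.piCongrRight fun n => discHomeo (C.eKD n)).trans piProdHomeo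

/-- `Z ≅ W × Z`. -/
def hZW : (∀ n, C.D n) ≃ₜ ((ℕ → C.K) × ∀ n, C.D n) :=
  C.hZomega.trans <| (Homeomorph.piCongrRight fun _ => C.hKZ.symm).trans <|
    piProdHomeo.trans ((Homeomorph.refl _).prodCongr C.hZomega.symm)

/-- The Baire space `κ^ω` is homeomorphic to `Z`. -/
def baireHomeoZ : (ℕ → C.K) ≃ₜ (∀ n, C.D n) :=
  C.hWZ.trans <| (Homeomorph.prodComm _ _).trans C.hZW.symm

/-! ### The homeomorphism between `P(κ)` and `Z` -/

/-- Restriction of a subset of `K` to its blocks. -/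
def toF (b : Set C.K) : ∀ n, C.D n := fun n => (Subtype.val ⁻¹' b : Set (C.I n))

/-- Reconstruction of a subset of `K` from its restrictions to the blocks. -/
def invF (y : ∀ n, C.D n) : Set C.K := ⋃ n, (Subtype.val '' (y n : Set (C.I n)))

lemma toF_invF (y : ∀ n, C.D n) : C.toF (C.invF y) = y := by
  funext n
  show (Subtype.val ⁻¹' (⋃ k, (Subtype.val '' (y k : Set (C.I k)))) : Set (C.I n)) = y n
  ext x
  simp only [mem_preimage, mem_iUnion, mem_image]
  constructor
  · rintro ⟨k, z, hz, hzx⟩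
    have hxk : (x : C.K) ∈ C.I k := hzx ▸ z.2
    have hkn : k = n := C.I_disjoint hxk x.2
    subst hkn
    rwa [show z = x from Subtype.ext hzx] at hz
  · intro hx
    exact ⟨n, x, hx, rfl⟩

lemma invF_toF (b : Set C.K) : C.invF (C.toF b) = b := by
  show (⋃ n, (Subtype.val '' (Subtype.val ⁻¹' b : Set (C.I n)))) = b
  ext x
  simp only [mem_iUnion, Subtype.image_preimage_coe]
  constructor
  · rintro ⟨n, _, hx⟩; exact hx
  · intro hx
    obtain ⟨n, hn⟩ := C.exists_mem_I x
    exact ⟨n, hn, hx⟩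

lemma Iio_eta_union (n : ℕ) :
    Set.Iio (C.eta (n + 1)) = Set.Iio (C.eta n) ∪ C.I n := by
  ext x
  simp only [C.Iio_eta, mem_setOf_eq, mem_union, I]
  constructor
  · intro h
    rcases lt_or_ge (ordinalOf x) (C.o n) with h' | h'
    · exact Or.inl h'
    · exact Or.inr ⟨h', h⟩
  · rintro (h | h)
    · exact h.trans (C.o_lt_succ n)
    · exact h.2

lemma I_subset_Iio (n : ℕ) : C.I n ⊆ Set.Iio (C.eta (n + 1)) := by
  rw [C.Iio_eta_union n]; exact subset_union_right

lemma disj_Iio_I {c : Set C.K} {n : ℕ} (hc : c ⊆ Set.Iio (C.eta n)) : c ∩ C.I n = ∅ := by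
  ext x
  simp only [mem_inter_iff, mem_empty_iff_false, iff_false, not_and]
  intro hx hxI
  exact absurd ((C.lt_eta_iff.1 (hc hx)).trans_le hxI.1) (lt_irrefl _)

lemma slice_eq (n : ℕ) (a₀ : Set (C.I n)) :
    {b : Set C.K | Subtype.val ⁻¹' b = a₀} =
      ⋃ (c : Set C.K) (_ : c ⊆ Set.Iio (C.eta n)),
        {b | b ∩ Set.Iio (C.eta (n + 1)) = c ∪ (Subtype.val '' a₀)} := by
  ext b
  simp only [mem_setOf_eq, mem_iUnion]
  constructor
  · intro h
    refine ⟨b ∩ Set.Iio (C.eta n), inter_subset_right, ?_⟩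
    rw [C.Iio_eta_union n, inter_union_distrib_left]
    congr 1
    rw [← h, Subtype.image_preimage_coe, inter_comm]
  · rintro ⟨c, hc, h⟩
    have hin : b ∩ C.I n = Subtype.val '' a₀ := by
      calc b ∩ C.I n = (b ∩ Set.Iio (C.eta (n + 1))) ∩ C.I n := by
            rw [inter_assoc, inter_eq_self_of_subset_right (C.I_subset_Iio n)]
        _ = (c ∪ Subtype.val '' a₀) ∩ C.I n := by rw [h]
        _ = (c ∩ C.I n) ∪ (Subtype.val '' a₀ ∩ C.I n) := union_inter_distrib_right _ _ _
        _ = Subtype.val '' a₀ := by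
            rw [C.disj_Iio_I hc, inter_eq_self_of_subset_left (Subtype.coe_image_subset _ _)]
            exact empty_union _
    calc Subtype.val ⁻¹' b = Subtype.val ⁻¹' (b ∩ C.I n) := by
          rw [preimage_inter, Subtype.coe_preimage_self, inter_univ]
      _ = Subtype.val ⁻¹' (Subtype.val '' a₀) := by rw [hin]
      _ = a₀ := preimage_image_eq _ Subtype.coe_injective

lemma slice_isOpen (n : ℕ) (a₀ : Set (C.I n)) :
    IsOpen[powTop C.κ] {b : Set C.K | Subtype.val ⁻¹' b = a₀} := by
  letI := powTop C.κ
  show IsOpen {b : Set C.K | Subtype.val ⁻¹' b = a₀}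
  rw [C.slice_eq n a₀]
  refine isOpen_iUnion fun c => isOpen_iUnion fun hc => ?_
  refine TopologicalSpace.isOpen_generateFrom_of_mem ?_
  refine ⟨C.eta (n + 1), c ∪ Subtype.val '' a₀, ?_, rfl⟩
  refine union_subset (hc.trans ?_) ((Subtype.coe_image_subset _ _).trans (C.I_subset_Iio n))
  exact Iio_subset_Iio (le_of_lt (by rw [C.lt_eta_iff, C.ordinalOf_eta]; exact C.o_lt_succ n))

lemma toF_continuous : Continuous[powTop C.κ, _] C.toF := by
  letI := powTop C.κ
  refine continuous_pi fun n => ?_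
  rw [continuous_discrete_rng]
  intro a₀
  have : (fun b => C.toF b n) ⁻¹' {a₀} = {b : Set C.K | Subtype.val ⁻¹' b = a₀} := by
    ext b; simp [toF]; exact Iff.rfl
  rw [this]
  exact C.slice_isOpen n a₀

lemma cyl_isOpen (n : ℕ) (y : ∀ k, C.D k) :
    IsOpen {z : ∀ k, C.D k | ∀ k < n, z k = y k} := by
  have h : {z : ∀ k, C.D k | ∀ k < n, z k = y k} =
      Set.pi ↑(Finset.range n) (fun k => ({y k} : Set (C.D k))) := by
    ext z; simp [Set.mem_pi]
  rw [h]
  exact isOpen_set_pi (Finset.range n).finite_toSet fun k _ => isOpen_discrete _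

lemma invF_det {n : ℕ} {β : C.K} (hβ : ordinalOf β < C.o n)
    (y z : ∀ k, C.D k) (hyz : ∀ k < n, y k = z k) :
    C.invF y ∩ Set.Iio β ⊆ C.invF z ∩ Set.Iio β := by
  rintro x ⟨hx1, hx2⟩
  obtain ⟨k, hk⟩ := mem_iUnion.1 hx1
  have hxI : x ∈ C.I k := Subtype.coe_image_subset _ _ hk
  have hkn : k < n := by
    have h1 : C.o k ≤ ordinalOf x := hxI.1
    have h2 : ordinalOf x < C.o n := (ordinalOf_lt_iff.1 hx2).trans hβ
    exact (C.o_mono.lt_iff_lt).1 (h1.trans_lt h2)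
  refine ⟨mem_iUnion.2 ⟨k, ?_⟩, hx2⟩
  rwa [← hyz k hkn]

lemma invF_continuous : Continuous[_, powTop C.κ] C.invF := by
  unfold powTop
  rw [continuous_generateFrom_iff]
  rintro U ⟨β, a, ha, rfl⟩
  obtain ⟨n, hn⟩ := C.o_cofinal (ordinalOf_lt_ord β)
  have hset : C.invF ⁻¹' {b | b ∩ Set.Iio β = a} =
      ⋃ (y : ∀ k, C.D k) (_ : C.invF y ∩ Set.Iio β = a), {z | ∀ k < n, z k = y k} := by
    ext z
    simp only [mem_preimage, mem_setOf_eq, mem_iUnion]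
    constructor
    · intro hz
      exact ⟨z, hz, fun k _ => rfl⟩
    · rintro ⟨y, hy, hzy⟩
      have h1 : C.invF z ∩ Set.Iio β ⊆ C.invF y ∩ Set.Iio β :=
        C.invF_det hn z y hzy
      have h2 : C.invF y ∩ Set.Iio β ⊆ C.invF z ∩ Set.Iio β :=
        C.invF_det hn y z (fun k hk => (hzy k hk).symm)
      exact (Set.Subset.antisymm h1 h2).trans hy
  rw [hset]
  exact isOpen_iUnion fun y => isOpen_iUnion fun _ => C.cyl_isOpen n y

/-- The homeomorphism between `P(κ)` with the `powTop` topology and the product `Z`. -/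
def powHomeo : @Homeomorph (Set C.K) (∀ n, C.D n) (powTop C.κ) _ :=
  @Homeomorph.mk _ _ (powTop C.κ) _ ⟨C.toF, C.invF, C.invF_toF, C.toF_invF⟩
    C.toF_continuous C.invF_continuous

/-- The main homeomorphism. -/
def mainHomeo : @Homeomorph (ℕ → C.K) (Set C.K) _ (powTop C.κ) := by
  letI := powTop C.κ
  exact C.baireHomeoZ.trans C.powHomeo.symm

end Ctx

/-- For κ an uncountable strong limit cardinal of countable cofinality, the generalized
Baire space κ^ω is homeomorphic to P(κ) with the topology generated by the N_{η,a}. -/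
theorem baire_homeomorphic_to_powerset
    (κ : Cardinal)
    (huncount : ℵ₀ < κ)
    (hsl : ∀ c < κ, 2 ^ c < κ)
    (hcof : κ.ord.cof = ℵ₀) :
    Nonempty (@Homeomorph (ℕ → κ.ord.ToType) (Set κ.ord.ToType) _ (powTop κ)) := by
  haveI : IsWellOrder κ.ord.ToType (· < ·) := isWellOrder_lt
  obtain ⟨S, hUnb, hS⟩ := Order.exists_cof_eq κ.ord.ToType
  rw [Ordinal.cof_toType, hcof] at hS
  have hcnt : Countable S := Cardinal.mk_le_aleph0_iff.1 hS.le
  have hne : Nonempty S := Cardinal.mk_ne_zero_iff.1 (by rw [hS]; exact Cardinal.aleph0_ne_zero)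
  obtain ⟨f, hf⟩ := exists_surjective_nat S
  set l : ℕ → Cardinal := fun j => max ℵ₀ (ordinalOf ((f j : S) : κ.ord.ToType)).card with hl
  have hinf : ∀ j, ℵ₀ ≤ l j := fun j => le_max_left _ _
  have hlt : ∀ j, l j < κ := by
    intro j
    exact max_lt huncount (Cardinal.lt_ord.1 (Ctx.ordinalOf_lt_ord _))
  have hcof' : ∀ c < κ, ∃ j, c < l j := by
    intro c hc
    have h2 : (2 : Cardinal) ^ c < κ := hsl c hc
    have hβ : ((2 : Cardinal) ^ c).ord < κ.ord := Cardinal.ord_lt_ord.2 h2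
    set x : κ.ord.ToType := (Ordinal.ToType.mk (o := κ.ord)) ⟨((2 : Cardinal) ^ c).ord, hβ⟩ with hx
    obtain ⟨y, hyS, hyx⟩ := hUnb x
    obtain ⟨j, hj⟩ := hf ⟨y, hyS⟩
    refine ⟨j, (Cardinal.cantor c).trans_le ?_⟩
    have hxy : ordinalOf x ≤ ordinalOf y := by
      by_contra h
      exact not_lt.2 hyx (Ctx.ordinalOf_lt_iff.2 (not_le.1 h))
    have h3 : ordinalOf x = ((2 : Cardinal) ^ c).ord := Ctx.ordinalOf_enum _ _
    have h4 : (2 : Cardinal) ^ c ≤ (ordinalOf y).card := by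
      have := Ordinal.card_le_card hxy
      rwa [h3, Cardinal.card_ord] at this
    refine h4.trans ?_
    have : ((f j : S) : κ.ord.ToType) = y := by rw [hj]
    rw [hl]
    simp only [this]
    exact le_max_right _ _
  exact ⟨(Ctx.mk κ l huncount hsl hinf hlt hcof').mainHomeo⟩
end
end

section
/- Assume ℵ_ω is a strong limit cardinal and let ⟨δ_n : n < ω⟩ be a strictly increasing sequence of infinite cardinals below ℵ_ω with supremum ℵ_ω. If ⟨f_β : β < ℵ_{ω+1}⟩ is a <*-increasing sequence of elements of Π_{n<ω} δ_n and the set {f_β : β < ℵ_{ω+1}} ⊆ (ℵ_ω)^ω has the ℵ_ω-PSP, then 2^{ℵ_ω} = ℵ_{ω+1}. (The core implication established in the proof of Proposition 3.4(2).) -/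
noncomputable section
open Cardinal Set

/-- `f <* g`: eventual domination, i.e. `f n < g n` for all but finitely many `n`. -/
def EvLT {o : Ordinal} (f g : ℕ → o.ToType) : Prop :=
  ∃ m : ℕ, ∀ n ≥ m, f n < g n

instance inst_s9 (o : Ordinal) : DiscreteTopology o.ToType := ⟨rfl⟩

/-- Fusion/tree construction: from a nonempty "combinatorially closed" subset of a
countable product with an `I k`-splitting property one gets an injection of
`∀ k, I k` into the set. -/
private lemma tree_lemma {X : Type u} (P : Set (ℕ → X)) (I : ℕ → Type u)
    (hP : P.Nonempty)
    (hclosed : ∀ g : ℕ → X, (∀ m : ℕ, ∃ p ∈ P, ∀ j < m, p j = g j) → g ∈ P)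
    (hsplit : ∀ y ∈ P, ∀ n k : ℕ, ∃ m, n < m ∧ ∃ ch : I k → (ℕ → X),
      (∀ i, ch i ∈ P) ∧ (∀ i, ∀ j < n, ch i j = y j) ∧
      (∀ i i', i ≠ i' → ∃ j < m, ch i j ≠ ch i' j)) :
    ∃ F : (∀ k, I k) → (ℕ → X), Function.Injective F ∧ ∀ b, F b ∈ P := by
  classical
  obtain ⟨x₀, hx₀⟩ := hP
  haveI : Nonempty X := ⟨x₀ 0⟩
  choose! lev hlev ch hchP hagree hdiff using hsplit
  let node : (∀ j, I j) → ℕ → (ℕ → X) × ℕ := fun b =>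
    fun k => Nat.rec (motive := fun _ => (ℕ → X) × ℕ) (x₀, 0)
      (fun k p => (ch p.1 p.2 k (b k), lev p.1 p.2 k)) k
  have hnode_succ : ∀ b k, node b (k + 1) =
      (ch (node b k).1 (node b k).2 k (b k), lev (node b k).1 (node b k).2 k) :=
    fun _ _ => rfl
  have hmem : ∀ b k, (node b k).1 ∈ P := by
    intro b k
    induction k with
    | zero => exact hx₀
    | succ k ih =>
      rw [hnode_succ]
      exact hchP _ ih _ k (b k)
  have hlevgt : ∀ b k, (node b k).2 < (node b (k + 1)).2 := by
    intro b k
    rw [hnode_succ]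
    exact hlev _ (hmem b k) _ k
  have hlevmono : ∀ b k l, k ≤ l → (node b k).2 ≤ (node b l).2 := by
    intro b k l h
    induction l, h using Nat.le_induction with
    | base => exact le_rfl
    | succ l hl ih => exact ih.trans (hlevgt b l).le
  have hlevge : ∀ b k, k ≤ (node b k).2 := by
    intro b k
    induction k with
    | zero => exact Nat.zero_le _
    | succ k ih => exact Nat.succ_le_of_lt (lt_of_le_of_lt ih (hlevgt b k))
  have hstep : ∀ b k, ∀ j < (node b k).2, (node b (k + 1)).1 j = (node b k).1 j := by
    intro b k j hj
    rw [hnode_succ]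
    exact hagree _ (hmem b k) _ k (b k) j hj
  have hlater : ∀ b k l, k ≤ l → ∀ j < (node b k).2, (node b l).1 j = (node b k).1 j := by
    intro b k l h
    induction l, h using Nat.le_induction with
    | base => intro j _; rfl
    | succ l hl ih =>
      intro j hj
      rw [hstep b l j (lt_of_lt_of_le hj (hlevmono b k l hl)), ih j hj]
  have hdep : ∀ b b' k, (∀ j < k, b j = b' j) → node b k = node b' k := by
    intro b b' k h
    induction k with
    | zero => rfl
    | succ k ih =>
      have e := ih fun j hj => h j (hj.trans (Nat.lt_succ_self k))
      rw [hnode_succ, hnode_succ, e, h k (Nat.lt_succ_self k)]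
  refine ⟨fun b j => (node b (j + 1)).1 j, ?_, ?_⟩
  · -- injectivity
    intro b b' hFeq
    funext k
    induction k using Nat.strong_induction_on with
    | _ k ih =>
      by_contra hne'
      have e : node b k = node b' k := hdep b b' k ih
      obtain ⟨j, hj, hne2⟩ :=
        hdiff (node b k).1 (hmem b k) (node b k).2 k (b k) (b' k) hne'
      have hjlev : j < (node b (k + 1)).2 := by rw [hnode_succ]; exact hj
      have hjlev' : j < (node b' (k + 1)).2 := by rw [hnode_succ, ← e]; exact hj
      have h1 : (node b (j + 1)).1 j = ch (node b k).1 (node b k).2 k (b k) j := by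
        rcases le_total (j + 1) (k + 1) with h | h
        · rw [← hlater b (j + 1) (k + 1) h j
            (lt_of_lt_of_le (Nat.lt_succ_self j) (hlevge b (j + 1))), hnode_succ]
        · rw [hlater b (k + 1) (j + 1) h j hjlev, hnode_succ]
      have h2 : (node b' (j + 1)).1 j = ch (node b k).1 (node b k).2 k (b' k) j := by
        rcases le_total (j + 1) (k + 1) with h | h
        · rw [← hlater b' (j + 1) (k + 1) h j
            (lt_of_lt_of_le (Nat.lt_succ_self j) (hlevge b' (j + 1))), hnode_succ, ← e]
        · rw [hlater b' (k + 1) (j + 1) h j hjlev', hnode_succ, ← e]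
      exact hne2 (h1 ▸ h2 ▸ congrFun hFeq j)
  · -- membership
    intro b
    apply hclosed
    intro m
    refine ⟨(node b m).1, hmem b m, fun j hj => ?_⟩
    have hjm : j < (node b m).2 := lt_of_lt_of_le hj (hlevge b m)
    rcases le_total (j + 1) m with h | h
    · exact hlater b (j + 1) m h j
        (lt_of_lt_of_le (Nat.lt_succ_self j) (hlevge b (j + 1)))
    · exact (hlater b m (j + 1) h j hjm).symm

/-- Splitting lemma: a set all of whose relative cylinders have size `≥ κ`, with
`μ ^ ℵ₀ < κ`, splits into more than `μ` many finitely-separated pieces. -/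
private lemma split_lemma {X : Type u} (P : Set (ℕ → X)) (κ μ : Cardinal.{u})
    (hμκ : μ ^ ℵ₀ < κ) {ι : Type u} (hι : #ι ≤ μ)
    (hperf : ∀ y ∈ P, ∀ n : ℕ, κ ≤ #(P ∩ {g | ∀ j < n, g j = y j} : Set _)) :
    ∀ y ∈ P, ∀ n : ℕ, ∃ m, n < m ∧ ∃ ch : ι → (ℕ → X),
      (∀ i, ch i ∈ P) ∧ (∀ i, ∀ j < n, ch i j = y j) ∧
      (∀ i i', i ≠ i' → ∃ j < m, ch i j ≠ ch i' j) := by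
  classical
  intro y hy n
  set S : Set (ℕ → X) := P ∩ {g | ∀ j < n, g j = y j} with hSdef
  have hSκ : κ ≤ #S := hperf y hy n
  let res : ∀ m : ℕ, (ℕ → X) → (Fin m → X) := fun m g j => g j
  have himag : ∃ m, μ < #(res m '' S) := by
    by_contra h
    push_neg at h
    have hinj : Function.Injective
        (fun g : S => fun m : ℕ => (⟨res m g.1, g.1, g.2, rfl⟩ : (res m '' S))) := by
      intro g g' he
      ext j
      have h1 := congrArg Subtype.val (congrFun he (j + 1))
      exact congrFun h1 ⟨j, Nat.lt_succ_self j⟩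
    have h1 : #S ≤ #(∀ m : ℕ, (res m '' S)) := Cardinal.mk_le_of_injective hinj
    have h2 : #(∀ m : ℕ, (res m '' S)) = Cardinal.prod fun m => #(res m '' S) :=
      Cardinal.mk_pi _
    have h3 : (Cardinal.prod fun m => #(res m '' S)) ≤ Cardinal.prod fun _ : ℕ => μ :=
      Cardinal.prod_le_prod _ _ h
    have h4 : (Cardinal.prod fun _ : ℕ => μ) = μ ^ ℵ₀ := by simp
    have : κ ≤ μ ^ ℵ₀ := hSκ.trans (h1.trans (h2 ▸ h3.trans h4.le))
    exact absurd hμκ (not_lt.2 this)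
  obtain ⟨m₀, hm₀⟩ := himag
  refine ⟨max m₀ (n + 1), lt_of_lt_of_le (Nat.lt_succ_self n) (le_max_right _ _), ?_⟩
  set m := max m₀ (n + 1) with hm
  have hmono : #(res m₀ '' S) ≤ #(res m '' S) := by
    have hcomp : res m₀ '' S =
        (fun v : Fin m → X => fun j : Fin m₀ => v (Fin.castLE (le_max_left _ _) j)) ''
          (res m '' S) := by
      rw [← Set.image_comp]; rfl
    rw [hcomp]
    exact Cardinal.mk_image_le
  have hμm : μ < #(res m '' S) := hm₀.trans_le hmono
  obtain ⟨e⟩ := Cardinal.le_def ι (res m '' S) |>.1 (hι.trans hμm.le)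
  have hmem : ∀ i : ι, ∃ g, g ∈ S ∧ res m g = (e i : Fin m → X) := fun i => (e i).2
  choose g hgS hgres using hmem
  refine ⟨g, fun i => (hgS i).1, fun i j hj => (hgS i).2 j hj, ?_⟩
  intro i i' hne
  have hres : res m (g i) ≠ res m (g i') := by
    rw [hgres i, hgres i']
    exact fun h => hne (e.injective (Subtype.ext h))
  have : ∃ j : Fin m, g i (j : ℕ) ≠ g i' (j : ℕ) := by
    by_contra hc
    push_neg at hc
    exact hres (funext fun j => hc j)
  obtain ⟨j, hj⟩ := this
  exact ⟨j, j.2, hj⟩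

/-- The single-universe core of the theorem. -/
private lemma core_sch
    (hsl : ∀ c < Cardinal.aleph.{u} Ordinal.omega0, 2 ^ c < Cardinal.aleph.{u} Ordinal.omega0)
    (δ : ℕ → Cardinal.{u})
    (hinf : ∀ n, ℵ₀ ≤ δ n)
    (hlt : ∀ n, δ n < Cardinal.aleph.{u} Ordinal.omega0)
    (hsup : (⨆ n, δ n) = Cardinal.aleph.{u} Ordinal.omega0)
    (A : Set (ℕ → (Cardinal.aleph.{u} Ordinal.omega0).ord.ToType))
    (hcard : #A = Order.succ (Cardinal.aleph.{u} Ordinal.omega0))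
    (hpsp : HasKappaPSP (Cardinal.aleph.{u} Ordinal.omega0) A) :
    2 ^ Cardinal.aleph.{u} Ordinal.omega0 = Order.succ (Cardinal.aleph.{u} Ordinal.omega0) := by
  classical
  set κ := Cardinal.aleph.{u} Ordinal.omega0 with hκ
  have hκinf : ℵ₀ ≤ κ := Cardinal.aleph0_le_aleph _
  have hge : Order.succ κ ≤ 2 ^ κ := Order.succ_le_of_lt (Cardinal.cantor κ)
  rcases hpsp with hsmall | ⟨P, hPsub, hPne, hPclosed, hPperf⟩
  · exfalso
    rw [hcard] at hsmall
    exact absurd hsmall (not_le.2 (Order.lt_succ κ))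
  · -- the perfect set case
    have hclosed' : ∀ g : ℕ → κ.ord.ToType,
        (∀ m : ℕ, ∃ p ∈ P, ∀ j < m, p j = g j) → g ∈ P := by
      intro g hg
      refine hPclosed.closure_subset ?_
      rw [mem_closure_iff]
      intro U hU hgU
      obtain ⟨I, u, hIu, hsub⟩ := isOpen_pi_iff.1 hU g hgU
      obtain ⟨p, hpP, hp⟩ := hg ((I.sup id) + 1)
      refine ⟨p, hsub fun i hi => ?_, hpP⟩
      rw [hp i (Nat.lt_succ_of_le (Finset.le_sup (f := id) hi))]
      exact (hIu i hi).2
    have hcyl : ∀ y ∈ P, ∀ n : ℕ,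
        κ ≤ #(P ∩ {g | ∀ j < n, g j = y j} : Set _) := by
      intro y hy n
      have hUopen : IsOpen {g : ℕ → κ.ord.ToType | ∀ j < n, g j = y j} := by
        have hformula : {g : ℕ → κ.ord.ToType | ∀ j < n, g j = y j} =
            ⋂ j ∈ Finset.range n, (fun g : ℕ → κ.ord.ToType => g j) ⁻¹' {y j} := by
          ext g
          simp [Finset.mem_range]
        rw [hformula]
        exact isOpen_biInter_finset fun j _ =>
          (continuous_apply j).isOpen_preimage _ (isOpen_discrete _)
      exact hPperf y hy _ hUopen fun j _ => rfl
    have hμκ : ∀ k : ℕ, (2 ^ δ k) ^ ℵ₀ < κ := by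
      intro k
      have h2 : δ k * ℵ₀ = δ k := by
        rw [Cardinal.mul_eq_max (hinf k) le_rfl, max_eq_left (hinf k)]
      rw [← Cardinal.power_mul, h2]
      exact hsl (δ k) (hlt k)
    obtain ⟨F, hFinj, hFP⟩ := tree_lemma P (fun k => ((2 ^ δ k : Cardinal).out)) hPne hclosed'
      (fun y hy n k => split_lemma P κ (2 ^ δ k) (hμκ k)
        (le_of_eq (Cardinal.mk_out (2 ^ δ k))) hcyl y hy n)
    have hsum : Cardinal.sum δ = κ := by
      apply le_antisymm
      · calc Cardinal.sum δ ≤ Cardinal.sum fun _ : ℕ => κ :=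
              Cardinal.sum_le_sum _ _ fun k => (hlt k).le
          _ = ℵ₀ * κ := by simp
          _ = κ := Cardinal.aleph0_mul_eq hκinf
      · rw [← hsup]
        exact ciSup_le' fun k => Cardinal.le_sum δ k
    have hpi : #(∀ k : ℕ, ((2 ^ δ k : Cardinal).out)) = 2 ^ κ := by
      rw [Cardinal.mk_pi]
      have heq : (Cardinal.prod fun k => #((2 ^ δ k : Cardinal).out)) = Cardinal.prod fun k => 2 ^ δ k := by
        congr 1
        funext k
        exact Cardinal.mk_out (2 ^ δ k)
      rw [heq, ← Cardinal.power_sum, hsum]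
    have h1 : 2 ^ κ ≤ #P := by
      rw [← hpi]
      exact Cardinal.mk_le_of_injective
        (f := fun b => (⟨F b, hFP b⟩ : P))
        (fun b b' h => hFinj (congrArg Subtype.val h))
    have h2 : #P ≤ Order.succ κ := hcard ▸ Cardinal.mk_le_mk_of_subset hPsub
    exact le_antisymm (h1.trans h2) hge

private lemma transfer_sl
    (h : ∀ c < Cardinal.aleph.{u} Ordinal.omega0, 2 ^ c < Cardinal.aleph.{u} Ordinal.omega0) :
    ∀ c < Cardinal.aleph.{v} Ordinal.omega0, 2 ^ c < Cardinal.aleph.{v} Ordinal.omega0 := by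
  have haleph : Cardinal.lift.{u} (Cardinal.aleph.{v} Ordinal.omega0)
      = Cardinal.lift.{v} (Cardinal.aleph.{u} Ordinal.omega0) := by
    rw [Cardinal.lift_aleph, Cardinal.lift_aleph, Ordinal.lift_omega0, Ordinal.lift_omega0]
  intro c hc
  have h1 : Cardinal.lift.{u} c < Cardinal.lift.{v} (Cardinal.aleph.{u} Ordinal.omega0) := by
    rw [← haleph]
    exact Cardinal.lift_lt.2 hc
  obtain ⟨c₀, hc₀lt, hc₀e⟩ := Cardinal.lt_lift_iff.1 h1
  have h3 : Cardinal.lift.{v} (2 ^ c₀) < Cardinal.lift.{v} (Cardinal.aleph.{u} Ordinal.omega0) :=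
    Cardinal.lift_lt.2 (h c₀ hc₀lt)
  rw [Cardinal.lift_power, Cardinal.lift_two, hc₀e, ← haleph] at h3
  refine Cardinal.lift_lt.1 ?_
  rw [Cardinal.lift_power, Cardinal.lift_two]
  exact h3

private lemma transfer_concl
    (h : 2 ^ Cardinal.aleph.{u} Ordinal.omega0 = Order.succ (Cardinal.aleph.{u} Ordinal.omega0)) :
    2 ^ Cardinal.aleph.{v} Ordinal.omega0 = Order.succ (Cardinal.aleph.{v} Ordinal.omega0) := by
  apply Cardinal.lift_injective.{u}
  rw [Cardinal.lift_power, Cardinal.lift_two, Cardinal.lift_succ, Cardinal.lift_aleph,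
    Ordinal.lift_omega0]
  have haleph : (Cardinal.aleph.{max v u} Ordinal.omega0)
      = Cardinal.lift.{v} (Cardinal.aleph.{u} Ordinal.omega0) := by
    rw [Cardinal.lift_aleph, Ordinal.lift_omega0]
  rw [haleph, ← Cardinal.lift_two.{v, u}, ← Cardinal.lift_power, h, Cardinal.lift_succ]

/-- If ℵ_ω is a strong limit cardinal, ⟨δ_n⟩ is a strictly increasing sequence of
infinite cardinals below ℵ_ω with supremum ℵ_ω, and ⟨f_β : β < ℵ_{ω+1}⟩ is a
<*-increasing sequence in Π_{n<ω} δ_n whose range has the ℵ_ω-PSP, then 2^{ℵ_ω} = ℵ_{ω+1}. -/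
theorem increasing_sequence_with_psp_gives_sch
    (hsl : ∀ c < Cardinal.aleph Ordinal.omega0, 2 ^ c < Cardinal.aleph Ordinal.omega0)
    (δ : ℕ → Cardinal)
    (hmono : StrictMono δ)
    (hinf : ∀ n, ℵ₀ ≤ δ n)
    (hlt : ∀ n, δ n < Cardinal.aleph Ordinal.omega0)
    (hsup : (⨆ n, δ n) = Cardinal.aleph Ordinal.omega0)
    (f : (Order.succ (Cardinal.aleph Ordinal.omega0)).ord.ToType →
      (ℕ → (Cardinal.aleph Ordinal.omega0).ord.ToType))
    (hmem : ∀ β, ∀ n, ordinalOf (f β n) < (δ n).ord)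
    (hincr : ∀ γ β, γ < β → EvLT (f γ) (f β))
    (hpsp : HasKappaPSP (Cardinal.aleph Ordinal.omega0) (Set.range f)) :
    2 ^ Cardinal.aleph Ordinal.omega0 = Order.succ (Cardinal.aleph Ordinal.omega0) := by
  classical
  have hfinj : Function.Injective f := by
    intro γ β h
    by_contra hne
    rcases lt_or_gt_of_ne hne with hlt' | hlt'
    · obtain ⟨m, hm⟩ := hincr γ β hlt'
      exact absurd (congrFun h m) (ne_of_lt (hm m le_rfl))
    · obtain ⟨m, hm⟩ := hincr β γ hlt'
      exact absurd (congrFun h m).symm (ne_of_lt (hm m le_rfl))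
  have hrange : #(Set.range f) = Order.succ (Cardinal.aleph Ordinal.omega0) := by
    apply Cardinal.lift_injective.{u_3}
    rw [Cardinal.mk_range_eq_lift.{u_3, u_2, 0} hfinj, Cardinal.mk_ord_toType, Cardinal.lift_succ,
      Cardinal.lift_succ, Cardinal.lift_aleph, Cardinal.lift_aleph, Ordinal.lift_omega0,
      Ordinal.lift_omega0]
  exact transfer_concl (core_sch (transfer_sl hsl) δ hinf hlt hsup (Set.range f) hrange hpsp)
end
end
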